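/- For all n ≥ 2, the number of nonnesting permutations of the multiset {1,1,2,2,…,n,n} that avoid both patterns 132 and 231 equals 2^n. -/

import Mathlib

/-- `w` is a permutation of the multiset `{1,1,2,2,…,n,n}`:
a word in which every value in `{1,…,n}` occurs exactly twice
and no other value occurs. -/
def IsMultisetPerm (n : ℕ) (w : List ℕ) : Prop :=
  ∀ i : ℕ, w.count i = if 1 ≤ i ∧ i ≤ n then 2 else 0

/-- `t` is order-isomorphic to the word `σ`:
same length, and entries compare (both `<` and `=`) in the same way. -/
def OrderIsoWord (t σ : List ℕ) : Prop :=
  t.length = σ.length ∧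
  ∀ r s : ℕ, r < σ.length → s < σ.length →
    ((t.getD r 0 < t.getD s 0 ↔ σ.getD r 0 < σ.getD s 0) ∧
     (t.getD r 0 = t.getD s 0 ↔ σ.getD r 0 = σ.getD s 0))

/-- `w` contains the pattern `σ`: some subsequence of `w`
is order-isomorphic to `σ`. -/
def Contains (w σ : List ℕ) : Prop :=
  ∃ t : List ℕ, t.Sublist w ∧ OrderIsoWord t σ

/-- `w` avoids the pattern `σ`. -/
def Avoids (w σ : List ℕ) : Prop := ¬ Contains w σ

/-- `w` is a nonnesting permutation of `{1,1,2,2,…,n,n}`: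
it avoids the patterns `1221` and `2112`. -/
def IsNonnesting (n : ℕ) (w : List ℕ) : Prop :=
  IsMultisetPerm n w ∧ Avoids w [1,2,2,1] ∧ Avoids w [2,1,1,2]

/-!
Let `N = n + 1` be the largest letter of a nonnesting word avoiding `132` and `231`, with `n ≥ 2`.
If `a, c < N` are separated by an occurrence of `N`, then avoiding `132` and `231` forces `a = c`.
A letter between the two copies of `N` occurs there only once (by `2112`-avoidance), so each of the
distinct letters `1` and `2` also occurs outside and would equal it; hence the two copies of `N` are
adjacent, and for the same reason they cannot have letters on both sides. So every such word is
`N N w` or `w N N` with `w` such a word for `n`, and conversely both extensions preserve all four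
avoidances. Starting from the four words for `n = 2`, the count doubles at each step.
-/

open List

theorem orderIsoWord_iff_forall_fin {t σ : List ℕ} :
    OrderIsoWord t σ ↔ t.length = σ.length ∧ ∀ r s : Fin σ.length,
      (t.getD r 0 < t.getD s 0 ↔ σ.getD r 0 < σ.getD s 0) ∧
      (t.getD r 0 = t.getD s 0 ↔ σ.getD r 0 = σ.getD s 0) :=
  and_congr_right fun _ => ⟨fun h r s => h r s r.2 s.2, fun h r s hr hs => h ⟨r, hr⟩ ⟨s, hs⟩⟩

theorem contains_iff_exists_mem_sublists {w σ : List ℕ} :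
    Contains w σ ↔ ∃ t ∈ w.sublists, OrderIsoWord t σ := by
  simp [Contains]

instance : DecidableRel OrderIsoWord := fun _ _ => decidable_of_iff' _ orderIsoWord_iff_forall_fin

instance : DecidableRel Contains := fun _ _ => decidable_of_iff' _ contains_iff_exists_mem_sublists

instance : DecidableRel Avoids := fun w σ => inferInstanceAs (Decidable ¬Contains w σ)

theorem contains_iff_exists_three {w σ : List ℕ} (hσ : σ.length = 3) :
    Contains w σ ↔ ∃ a b c, [a, b, c] <+ w ∧ OrderIsoWord [a, b, c] σ := by
  refine ⟨fun ⟨t, ht, hiso⟩ => ?_, fun ⟨a, b, c, h⟩ => ⟨_, h⟩⟩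
  obtain ⟨a, b, c, rfl⟩ := length_eq_three.1 (hiso.1.trans hσ)
  exact ⟨a, b, c, ht, hiso⟩

theorem contains_iff_exists_four {w σ : List ℕ} (hσ : σ.length = 4) :
    Contains w σ ↔ ∃ a b c d, [a, b, c, d] <+ w ∧ OrderIsoWord [a, b, c, d] σ := by
  refine ⟨fun ⟨t, ht, hiso⟩ => ?_, fun ⟨a, b, c, d, h⟩ => ⟨_, h⟩⟩
  obtain ⟨a, b, c, d, rfl⟩ := length_eq_four.1 (hiso.1.trans hσ)
  exact ⟨a, b, c, d, ht, hiso⟩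

theorem orderIsoWord_1221_iff {a b c d : ℕ} :
    OrderIsoWord [a, b, c, d] [1, 2, 2, 1] ↔ a < b ∧ c = b ∧ d = a := by
  simp [orderIsoWord_iff_forall_fin, Fin.forall_fin_succ]
  omega

theorem orderIsoWord_2112_iff {a b c d : ℕ} :
    OrderIsoWord [a, b, c, d] [2, 1, 1, 2] ↔ b < a ∧ c = b ∧ d = a := by
  simp [orderIsoWord_iff_forall_fin, Fin.forall_fin_succ]
  omega

theorem orderIsoWord_132_iff {a b c : ℕ} : OrderIsoWord [a, b, c] [1, 3, 2] ↔ a < c ∧ c < b := by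
  simp [orderIsoWord_iff_forall_fin, Fin.forall_fin_succ]
  omega

theorem orderIsoWord_231_iff {a b c : ℕ} : OrderIsoWord [a, b, c] [2, 3, 1] ↔ c < a ∧ a < b := by
  simp [orderIsoWord_iff_forall_fin, Fin.forall_fin_succ]
  omega

theorem contains_1221_iff {w : List ℕ} :
    Contains w [1, 2, 2, 1] ↔ ∃ a b, [a, b, b, a] <+ w ∧ a < b := by
  simp [contains_iff_exists_four, orderIsoWord_1221_iff]

theorem contains_2112_iff {w : List ℕ} :
    Contains w [2, 1, 1, 2] ↔ ∃ a b, [a, b, b, a] <+ w ∧ b < a := by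
  simp [contains_iff_exists_four, orderIsoWord_2112_iff]

theorem contains_132_iff {w : List ℕ} :
    Contains w [1, 3, 2] ↔ ∃ a b c, [a, b, c] <+ w ∧ a < c ∧ c < b := by
  simp [contains_iff_exists_three, orderIsoWord_132_iff]

theorem contains_231_iff {w : List ℕ} :
    Contains w [2, 3, 1] ↔ ∃ a b c, [a, b, c] <+ w ∧ c < a ∧ a < b := by
  simp [contains_iff_exists_three, orderIsoWord_231_iff]

theorem OrderIsoWord.reverse {t σ : List ℕ} (h : OrderIsoWord t σ) :
    OrderIsoWord t.reverse σ.reverse := by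
  obtain ⟨hlen, hcmp⟩ := h
  refine ⟨by simp [hlen], fun r s hr hs => ?_⟩
  rw [length_reverse] at hr hs
  rw [getD_reverse r (by omega), getD_reverse s (by omega), getD_reverse r hr, getD_reverse s hs,
    hlen]
  exact hcmp _ _ (by omega) (by omega)

theorem Contains.reverse {w σ : List ℕ} (h : Contains w σ) : Contains w.reverse σ.reverse :=
  let ⟨t, ht, hiso⟩ := h
  ⟨t.reverse, reverse_sublist.2 ht, hiso.reverse⟩

theorem avoids_reverse_iff {w σ : List ℕ} : Avoids w.reverse σ ↔ Avoids w σ.reverse := by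
  refine not_congr ⟨fun h => ?_, fun h => ?_⟩
  · simpa using h.reverse
  · simpa using h.reverse

theorem Avoids.of_sublist {v w σ : List ℕ} (h : Avoids w σ) (hvw : v <+ w) : Avoids v σ :=
  fun ⟨t, ht, hiso⟩ => h ⟨t, ht.trans hvw, hiso⟩

theorem eq_of_mem_of_mem_of_avoids_132_231 {N a c : ℕ} {l₁ l₂ : List ℕ}
    (h132 : Avoids (l₁ ++ N :: l₂) [1, 3, 2]) (h231 : Avoids (l₁ ++ N :: l₂) [2, 3, 1])
    (ha : a ∈ l₁) (hc : c ∈ l₂) (haN : a < N) (hcN : c < N) : a = c := by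
  have hs : [a, N, c] <+ l₁ ++ N :: l₂ :=
    (singleton_sublist.2 ha).append ((singleton_sublist.2 hc).cons_cons N)
  rcases lt_trichotomy a c with hac | rfl | hca
  · exact absurd (contains_132_iff.2 ⟨a, N, c, hs, hac, hcN⟩) h132
  · rfl
  · exact absurd (contains_231_iff.2 ⟨a, N, c, hs, hca, haN⟩) h231

theorem List.exists_eq_append_cons_append_cons {α : Type*} {a b : α} {l : List α}
    (h : [a, b] <+ l) : ∃ u v z, l = u ++ a :: (v ++ b :: z) := by
  obtain ⟨r₁, r₂, rfl, ha, hb⟩ := cons_sublist_iff.1 h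
  obtain ⟨u, v, rfl⟩ := append_of_mem ha
  obtain ⟨v', z, rfl⟩ := append_of_mem (singleton_sublist.1 hb)
  exact ⟨u, v ++ v', z, by simp⟩

section ConsCons

variable {N : ℕ} {w : List ℕ}

theorem le_of_mem_cons_cons (hw : ∀ x ∈ w, x < N) {x : ℕ} (hx : x ∈ N :: N :: w) : x ≤ N := by
  rcases mem_cons.1 hx with rfl | hx
  · rfl
  rcases mem_cons.1 hx with rfl | hx
  · rfl
  exact (hw x hx).le

theorem avoids_1221_cons_cons (hw : ∀ x ∈ w, x < N) (h : Avoids w [1, 2, 2, 1]) :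
    Avoids (N :: N :: w) [1, 2, 2, 1] := by
  intro hc
  obtain ⟨a, b, hs, hab⟩ := contains_1221_iff.1 hc
  have haN : a ≠ N := (hab.trans_le (le_of_mem_cons_cons hw (hs.subset (by simp)))).ne
  exact h (contains_1221_iff.2 ⟨a, b, (hs.of_cons_of_ne haN).of_cons_of_ne haN, hab⟩)

theorem avoids_2112_cons_cons (hw : ∀ x ∈ w, x < N) (h : Avoids w [2, 1, 1, 2]) :
    Avoids (N :: N :: w) [2, 1, 1, 2] := by
  intro hc
  obtain ⟨a, b, hs, hba⟩ := contains_2112_iff.1 hc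
  have hbN : b ≠ N := (hba.trans_le (le_of_mem_cons_cons hw (hs.subset (by simp)))).ne
  -- the final `a` comes after the `b`s, which are not among the leading copies of `N`
  have hbba : [b, b, a] <+ w :=
    (((sublist_cons_self a _).trans hs).of_cons_of_ne hbN).of_cons_of_ne hbN
  have haN : a ≠ N := (hw a (hbba.subset (by simp))).ne
  exact h (contains_2112_iff.2 ⟨a, b, (hs.of_cons_of_ne haN).of_cons_of_ne haN, hba⟩)

theorem avoids_132_cons_cons (hw : ∀ x ∈ w, x < N) (h : Avoids w [1, 3, 2]) :
    Avoids (N :: N :: w) [1, 3, 2] := by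
  intro hc
  obtain ⟨a, b, c, hs, hac, hcb⟩ := contains_132_iff.1 hc
  have haN : a ≠ N :=
    ((hac.trans hcb).trans_le (le_of_mem_cons_cons hw (hs.subset (by simp)))).ne
  exact h (contains_132_iff.2 ⟨a, b, c, (hs.of_cons_of_ne haN).of_cons_of_ne haN, hac, hcb⟩)

theorem avoids_231_cons_cons (hw : ∀ x ∈ w, x < N) (h : Avoids w [2, 3, 1]) :
    Avoids (N :: N :: w) [2, 3, 1] := by
  intro hc
  obtain ⟨a, b, c, hs, hca, hab⟩ := contains_231_iff.1 hc
  have haN : a ≠ N := (hab.trans_le (le_of_mem_cons_cons hw (hs.subset (by simp)))).ne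
  exact h (contains_231_iff.2 ⟨a, b, c, (hs.of_cons_of_ne haN).of_cons_of_ne haN, hca, hab⟩)

end ConsCons

section MultisetPerm

variable {n : ℕ} {w w' u v z : List ℕ}

theorem IsMultisetPerm.perm (h : IsMultisetPerm n w) (hp : w ~ w') : IsMultisetPerm n w' :=
  fun i => hp.count_eq i ▸ h i

theorem IsMultisetPerm.mem_iff (h : IsMultisetPerm n w) {x : ℕ} : x ∈ w ↔ 1 ≤ x ∧ x ≤ n := by
  rw [← count_pos_iff, h x]
  split_ifs <;> simp_all

theorem isMultisetPerm_iff_perm : IsMultisetPerm n w ↔ w ~ range' 1 n ++ range' 1 n := by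
  rw [perm_iff_count]
  refine forall_congr' fun i => ?_
  rw [count_append, count_range_1']
  split_ifs <;> omega

theorem isMultisetPerm_succ_cons_cons_iff :
    IsMultisetPerm (n + 1) ((n + 1) :: (n + 1) :: w) ↔ IsMultisetPerm n w := by
  refine forall_congr' fun i => ?_
  simp only [count_cons, beq_iff_eq]
  split_ifs <;> omega

theorem IsMultisetPerm.of_append_cons_append_cons
    (h : IsMultisetPerm (n + 1) (u ++ (n + 1) :: (v ++ (n + 1) :: z))) :
    IsMultisetPerm n (u ++ v ++ z) :=
  isMultisetPerm_succ_cons_cons_iff.1 <|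
    h.perm <| perm_middle.trans <| .cons _ <| by rw [← append_assoc]; exact perm_middle

end MultisetPerm

def nonnesting132231 (n : ℕ) : Set (List ℕ) :=
  {w | IsNonnesting n w ∧ Avoids w [1, 3, 2] ∧ Avoids w [2, 3, 1]}

section Nonnesting132231

variable {m n : ℕ} {w u v z : List ℕ}

theorem reverse_mem_nonnesting132231 (h : w ∈ nonnesting132231 n) :
    w.reverse ∈ nonnesting132231 n := by
  obtain ⟨⟨hperm, h1221, h2112⟩, h132, h231⟩ := h
  exact ⟨⟨hperm.perm (reverse_perm w).symm, avoids_reverse_iff.2 h1221,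
    avoids_reverse_iff.2 h2112⟩, avoids_reverse_iff.2 h231, avoids_reverse_iff.2 h132⟩

theorem reverse_mem_nonnesting132231_iff :
    w.reverse ∈ nonnesting132231 n ↔ w ∈ nonnesting132231 n :=
  ⟨fun h => by simpa using reverse_mem_nonnesting132231 h, reverse_mem_nonnesting132231⟩

theorem cons_cons_mem_nonnesting132231_iff :
    (m + 1) :: (m + 1) :: w ∈ nonnesting132231 (m + 1) ↔ w ∈ nonnesting132231 m := by
  have hsub : w <+ (m + 1) :: (m + 1) :: w :=
    (sublist_cons_self _ _).trans (sublist_cons_self _ _)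
  constructor
  · rintro ⟨⟨hperm, h1221, h2112⟩, h132, h231⟩
    exact ⟨⟨isMultisetPerm_succ_cons_cons_iff.1 hperm, h1221.of_sublist hsub,
      h2112.of_sublist hsub⟩, h132.of_sublist hsub, h231.of_sublist hsub⟩
  · rintro ⟨⟨hperm, h1221, h2112⟩, h132, h231⟩
    have hlt : ∀ x ∈ w, x < m + 1 := fun x hx => Nat.lt_succ_of_le (hperm.mem_iff.1 hx).2
    exact ⟨⟨isMultisetPerm_succ_cons_cons_iff.2 hperm, avoids_1221_cons_cons hlt h1221,
      avoids_2112_cons_cons hlt h2112⟩, avoids_132_cons_cons hlt h132,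
      avoids_231_cons_cons hlt h231⟩

theorem append_mem_nonnesting132231_iff :
    w ++ [m + 1, m + 1] ∈ nonnesting132231 (m + 1) ↔ w ∈ nonnesting132231 m := by
  rw [← reverse_mem_nonnesting132231_iff, reverse_append,
    ← reverse_mem_nonnesting132231_iff (w := w)]
  exact cons_cons_mem_nonnesting132231_iff

theorem middle_eq_nil_of_mem_nonnesting132231 (hm : 2 ≤ m)
    (hw : u ++ (m + 1) :: (v ++ (m + 1) :: z) ∈ nonnesting132231 (m + 1)) : v = [] := by
  obtain ⟨⟨hperm, -, h2112⟩, h132, h231⟩ := hw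
  have hrest := hperm.of_append_cons_append_cons
  have hlt : ∀ x ∈ u ++ v ++ z, x < m + 1 := fun x hx => Nat.lt_succ_of_le (hrest.mem_iff.1 hx).2
  have h132' : Avoids ((u ++ (m + 1) :: v) ++ (m + 1) :: z) [1, 3, 2] := by simpa using h132
  have h231' : Avoids ((u ++ (m + 1) :: v) ++ (m + 1) :: z) [2, 3, 1] := by simpa using h231
  refine eq_nil_iff_forall_not_mem.2 fun x hx => ?_
  have hx_eq : ∀ y, 1 ≤ y → y ≤ m → y = x := by
    intro y hy1 hym
    have hvy : v.count y ≤ 1 := by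
      by_contra! hvy
      have hyy : [y, y] <+ v := (replicate_sublist_iff (n := 2)).2 hvy
      have hs : [m + 1, y, y, m + 1] <+ u ++ (m + 1) :: (v ++ (m + 1) :: z) :=
        ((hyy.append ((nil_sublist z).cons_cons _)).cons_cons _).trans (sublist_append_right u _)
      exact h2112 (contains_2112_iff.2 ⟨m + 1, y, hs, by omega⟩)
    have hy : y ∈ u ∨ y ∈ z := by
      have hcount := hrest y
      rw [if_pos ⟨hy1, hym⟩, count_append, count_append] at hcount
      by_contra! hy
      rw [count_eq_zero.2 hy.1, count_eq_zero.2 hy.2] at hcount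
      omega
    rcases hy with hy | hy
    · exact eq_of_mem_of_mem_of_avoids_132_231 h132 h231 hy (by simp [hx])
        (hlt y (by simp [hy])) (hlt x (by simp [hx]))
    · exact (eq_of_mem_of_mem_of_avoids_132_231 h132' h231' (by simp [hx]) hy
        (hlt x (by simp [hx])) (hlt y (by simp [hy]))).symm
  have := hx_eq 1 le_rfl (by omega)
  have := hx_eq 2 (by omega) hm
  omega

theorem eq_nil_or_eq_nil_of_mem_nonnesting132231 (hm : 2 ≤ m)
    (hw : u ++ (m + 1) :: (m + 1) :: z ∈ nonnesting132231 (m + 1)) : u = [] ∨ z = [] := by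
  obtain ⟨⟨hperm, -, -⟩, h132, h231⟩ := hw
  have hrest : IsMultisetPerm m (u ++ z) := by
    simpa using hperm.of_append_cons_append_cons (v := [])
  have hlt : ∀ x ∈ u ++ z, x < m + 1 := fun x hx => Nat.lt_succ_of_le (hrest.mem_iff.1 hx).2
  have hsep : ∀ x ∈ u, ∀ y ∈ z, x = y := fun x hx y hy =>
    eq_of_mem_of_mem_of_avoids_132_231 h132 h231 hx (mem_cons_of_mem _ hy)
      (hlt x (by simp [hx])) (hlt y (by simp [hy]))
  by_contra! hne
  obtain ⟨a, ha⟩ := exists_mem_of_ne_nil u hne.1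
  obtain ⟨c, hc⟩ := exists_mem_of_ne_nil z hne.2
  have hall : ∀ y, 1 ≤ y → y ≤ m → y = a := by
    intro y hy1 hym
    rcases mem_append.1 (hrest.mem_iff.2 ⟨hy1, hym⟩) with hy | hy
    · exact (hsep y hy c hc).trans (hsep a ha c hc).symm
    · exact (hsep a ha y hy).symm
  have := hall 1 le_rfl (by omega)
  have := hall 2 (by omega) hm
  omega

theorem eq_cons_cons_or_eq_append_of_mem_nonnesting132231 (hm : 2 ≤ m)
    (hw : w ∈ nonnesting132231 (m + 1)) :
    (∃ w', w = (m + 1) :: (m + 1) :: w') ∨ ∃ w', w = w' ++ [m + 1, m + 1] := by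
  have hpair : [m + 1, m + 1] <+ w :=
    (replicate_sublist_iff (n := 2)).2 (by rw [hw.1.1, if_pos (by omega)])
  obtain ⟨u, v, z, rfl⟩ := exists_eq_append_cons_append_cons hpair
  obtain rfl := middle_eq_nil_of_mem_nonnesting132231 hm hw
  rcases eq_nil_or_eq_nil_of_mem_nonnesting132231 hm hw with rfl | rfl
  · exact .inl ⟨z, rfl⟩
  · exact .inr ⟨u, by simp⟩

theorem nonnesting132231_succ (hm : 2 ≤ m) :
    nonnesting132231 (m + 1) = (fun w => (m + 1) :: (m + 1) :: w) '' nonnesting132231 m ∪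
      (· ++ [m + 1, m + 1]) '' nonnesting132231 m := by
  ext w
  constructor
  · intro hw
    rcases eq_cons_cons_or_eq_append_of_mem_nonnesting132231 hm hw with ⟨w', rfl⟩ | ⟨w', rfl⟩
    · exact .inl ⟨w', cons_cons_mem_nonnesting132231_iff.1 hw, rfl⟩
    · exact .inr ⟨w', append_mem_nonnesting132231_iff.1 hw, rfl⟩
  · rintro (⟨w', hw', rfl⟩ | ⟨w', hw', rfl⟩)
    · exact cons_cons_mem_nonnesting132231_iff.2 hw'
    · exact append_mem_nonnesting132231_iff.2 hw'

theorem disjoint_image_cons_cons_image_append (hm : 1 ≤ m) :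
    Disjoint ((fun w => (m + 1) :: (m + 1) :: w) '' nonnesting132231 m)
      ((· ++ [m + 1, m + 1]) '' nonnesting132231 m) := by
  rw [Set.disjoint_left]
  rintro _ ⟨a, ha, rfl⟩ ⟨b, hb, hab⟩
  rcases b with _ | ⟨x, b⟩
  · have h1 : 1 ∈ a := ha.1.1.mem_iff.2 ⟨le_rfl, hm⟩
    simp_all
  · have hx : x ≤ m := (hb.1.1.mem_iff.1 mem_cons_self).2
    simp only [cons_append, cons.injEq] at hab
    omega

theorem nonnesting132231_two :
    nonnesting132231 2 = {[1, 1, 2, 2], [1, 2, 1, 2], [2, 1, 2, 1], [2, 2, 1, 1]} := by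
  -- `permutations'`, unlike `permutations`, is structurally recursive, so `decide` evaluates it
  have h : ((range' 1 2 ++ range' 1 2).permutations'.toFinset.filter fun w =>
      Avoids w [1, 2, 2, 1] ∧ Avoids w [2, 1, 1, 2] ∧ Avoids w [1, 3, 2] ∧ Avoids w [2, 3, 1]) =
      {[1, 1, 2, 2], [1, 2, 1, 2], [2, 1, 2, 1], [2, 2, 1, 1]} := by
    decide
  ext w
  simpa [nonnesting132231, IsNonnesting, isMultisetPerm_iff_perm, and_assoc] using
    Finset.ext_iff.1 h w

theorem encard_nonnesting132231 (hn : 2 ≤ n) : (nonnesting132231 n).encard = 2 ^ n := by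
  induction n, hn using Nat.le_induction with
  | base =>
    rw [nonnesting132231_two]
    norm_num [Set.encard_insert_of_notMem]
  | succ m hm ih =>
    have hcons : Function.Injective fun w : List ℕ => (m + 1) :: (m + 1) :: w :=
      fun _ _ h => by simpa using h
    rw [nonnesting132231_succ hm,
      Set.encard_union_eq (disjoint_image_cons_cons_image_append (by omega)),
      hcons.encard_image, (append_left_injective _).encard_image, ih, pow_succ, mul_two]

end Nonnesting132231

theorem nonnesting_avoid_132_231 (n : ℕ) (hn : 2 ≤ n) :
    {w : List ℕ | IsNonnesting n w ∧ Avoids w [1,3,2] ∧ Avoids w [2,3,1]}.ncard =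
      2 ^ n := by
  rw [Set.ncard_def]
  change (nonnesting132231 n).encard.toNat = 2 ^ n
  rw [encard_nonnesting132231 hn]
  simp
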